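/- Let H be a group, let i be a positive integer, and suppose H has only finitely many normal subgroups of index i. Let φ : H → H be an injective group homomorphism such that φ(H) has finite index in H and gcd([H : φ(H)], i) = 1. Then for every normal subgroup K of H of index i there exists an integer k > 0 such that φᵏ(K) ⊆ K. -/

import Mathlib

/-!
Pulling back along `φ` sends a normal subgroup `N` of index `i` to one of index
`[φ(H) : N ∩ φ(H)]`, and coprimality of `[H : φ(H)]` with `i` forces this to be `i` again. The
same coprimality shows that `N` is recovered from `N ∩ φ(H)`, so `N ↦ φ⁻¹(N)` is a permutation of
the finite set of normal subgroups of index `i`, and some positive power of it fixes `K`.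
-/

theorem Set.InjOn.exists_pos_iterate_eq {α : Type*} {f : α → α} {s : Set α} (hinj : s.InjOn f)
    (hs : s.Finite) (hmaps : s.MapsTo f s) {x : α} (hx : x ∈ s) :
    ∃ k, 0 < k ∧ f^[k] x = x := by
  have := hs.to_subtype
  obtain ⟨k, hk, hper⟩ := (hmaps.restrict_inj.mpr hinj).mem_periodicPts ⟨x, hx⟩
  exact ⟨k, hk, by simpa [hmaps.coe_iterate_restrict] using congrArg Subtype.val hper⟩

namespace Subgroup

variable {G : Type*} [Group G]

theorem mem_iterate_comap (f : G →* G) (K : Subgroup G) (k : ℕ) (x : G) :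
    x ∈ (comap f)^[k] K ↔ f^[k] x ∈ K := by
  induction k generalizing K with
  | zero => rfl
  | succ k ih => rw [Function.iterate_succ_apply, ih, Function.iterate_succ_apply']; rfl

theorem relIndex_eq_index_of_coprime {N R : Subgroup G} [N.Normal]
    (h : R.index.Coprime N.index) : N.relIndex R = N.index := by
  refine Nat.dvd_antisymm (relIndex_dvd_index_of_normal N R) (h.symm.dvd_of_dvd_mul_right ?_)
  rw [← inf_relIndex_right, relIndex_mul_index inf_le_right]
  exact index_dvd_of_le inf_le_left

theorem relIndex_normal_eq_index_of_coprime {N R : Subgroup G} [N.Normal]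
    (h : R.index.Coprime N.index) : R.relIndex N = R.index := by
  rcases eq_or_ne N.index 0 with hN | hN
  · rw [hN, Nat.coprime_zero_right, index_eq_one] at h
    simp [h]
  · refine Nat.eq_of_mul_eq_mul_right (Nat.pos_of_ne_zero hN) ?_
    calc R.relIndex N * N.index = (N ⊓ R).index := by
          rw [← inf_relIndex_left, relIndex_mul_index inf_le_left]
      _ = R.index * N.index := by
          rw [← relIndex_mul_index inf_le_right, inf_relIndex_right,
            relIndex_eq_index_of_coprime h, mul_comm]

/-- `[A : A ∩ B]` divides both `[A : A ∩ R] = [G : R]` and `[G : B]`. -/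
theorem le_of_inf_le_of_coprime {A B R : Subgroup G} [A.Normal] [B.Normal]
    (hA : R.index.Coprime A.index) (hB : R.index.Coprime B.index) (h : A ⊓ R ≤ B) : A ≤ B := by
  have hR : B.relIndex A ∣ R.index := by
    rw [← relIndex_normal_eq_index_of_coprime hA, ← inf_relIndex_left A R]
    exact relIndex_dvd_of_le_left A h
  exact relIndex_eq_one.mp (Nat.eq_one_of_dvd_coprimes hB hR (relIndex_dvd_index_of_normal B A))

theorem index_comap_eq_of_coprime (f : G →* G) {N : Subgroup G} [N.Normal]
    (h : f.range.index.Coprime N.index) : (N.comap f).index = N.index := by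
  rw [index_comap, relIndex_eq_index_of_coprime h]

theorem comap_injOn_of_coprime (f : G →* G) :
    {N : Subgroup G | N.Normal ∧ f.range.index.Coprime N.index}.InjOn (comap f) := by
  rintro A ⟨hA, hAco⟩ B ⟨hB, hBco⟩ hAB
  have hrange : A ⊓ f.range = B ⊓ f.range := by
    rw [inf_comm, ← map_comap_eq, hAB, map_comap_eq, inf_comm]
  exact le_antisymm (le_of_inf_le_of_coprime hAco hBco (hrange ▸ inf_le_left))
    (le_of_inf_le_of_coprime hBco hAco (hrange ▸ inf_le_left))

end Subgroup

theorem exists_pow_map_le_of_normal_general {H : Type*} [Group H] (i : ℕ)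
    (hfin : {N : Subgroup H | N.Normal ∧ N.index = i}.Finite)
    (φ : H →* H) (hco : Nat.gcd φ.range.index i = 1) :
    ∀ K : Subgroup H, K.Normal → K.index = i →
      ∃ k : ℕ, 0 < k ∧ ∀ x ∈ K, (⇑φ)^[k] x ∈ K := by
  intro K hK hKi
  have hmaps : {N : Subgroup H | N.Normal ∧ N.index = i}.MapsTo (Subgroup.comap φ)
      {N : Subgroup H | N.Normal ∧ N.index = i} := by
    rintro N ⟨hN, rfl⟩
    exact ⟨hN.comap φ, Subgroup.index_comap_eq_of_coprime φ hco⟩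
  have hinj : {N : Subgroup H | N.Normal ∧ N.index = i}.InjOn (Subgroup.comap φ) :=
    (Subgroup.comap_injOn_of_coprime φ).mono <| by rintro N ⟨hN, rfl⟩; exact ⟨hN, hco⟩
  obtain ⟨k, hk, hfix⟩ := hinj.exists_pos_iterate_eq hfin hmaps ⟨hK, hKi⟩
  refine ⟨k, hk, fun x hx => ?_⟩
  rw [← Subgroup.mem_iterate_comap, hfix]
  exact hx

/-- Let `H` be a group, `i` a positive integer, and suppose `H` has only finitely many normal
subgroups of index `i`. Let `φ : H → H` be an injective group homomorphism such that `φ(H)`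
has finite index in `H` and `gcd([H : φ(H)], i) = 1`. Then for every normal subgroup `K` of
`H` of index `i` there exists `k > 0` with `φᵏ(K) ⊆ K`. -/
theorem exists_pow_map_le_of_normal {H : Type*} [Group H] (i : ℕ) (hi : 0 < i)
    (hfin : {N : Subgroup H | N.Normal ∧ N.index = i}.Finite)
    (φ : H →* H) (hφ : Function.Injective φ)
    (hidx : φ.range.index ≠ 0) (hco : Nat.gcd φ.range.index i = 1) :
    ∀ K : Subgroup H, K.Normal → K.index = i →
      ∃ k : ℕ, 0 < k ∧ ∀ x ∈ K, (⇑φ)^[k] x ∈ K :=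
  exists_pow_map_le_of_normal_general i hfin φ hco
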